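/- arXiv:2001.06073 — 3 statements merged into one kernel-verified Lean document; each statement's English description precedes it below -/
import Mathlib

section
/- The Lehner Gauss map L on [1,2), defined by L(x) = 1/(2−x) for x ∈ [1, 3/2) and L(x) = 1/(x−1) for x ∈ [3/2, 2), preserves the measure with density 1/(x−1) with respect to Lebesgue measure; that is, for every Borel set A ⊆ [1,2), ∫_{L⁻¹(A)} dx/(x−1) = ∫_A dx/(x−1). -/
open MeasureTheory

/-- The Lehner Gauss map on [1,2). -/
noncomputable def lehnerMap (x : ℝ) : ℝ :=
  if x < 3 / 2 then 1 / (2 - x) else 1 / (x - 1)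

/-! On `[1, 2)` the map `L` has the two inverse branches `y ↦ 2 - 1/y` (onto `[1, 3/2)`) and
`y ↦ 1 + 1/y` (onto `(3/2, 2)`), both with `|g'(y)| = 1/y²`. Changing variables along each branch
turns the integral of `ρ(x) = 1/(x-1)` over `L⁻¹(A)` into the integral over `A` of
`Σ_g |g'| · ρ ∘ g = 1/(y²(1 - 1/y)) + 1/y = 1/(y-1) = ρ(y)`, off the null set `{1}`. -/

open Set

theorem lintegral_image_const_add_inv {s : Set ℝ} (hs : MeasurableSet s) (h0 : (0 : ℝ) ∉ s)
    (c : ℝ) (f : ℝ → ENNReal) :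
    ∫⁻ x in (fun y => c + y⁻¹) '' s, f x =
      ∫⁻ y in s, ENNReal.ofReal (y ^ 2)⁻¹ * f (c + y⁻¹) := by
  rw [lintegral_image_eq_lintegral_abs_deriv_mul hs
    (fun y hy => ((hasDerivAt_inv (ne_of_mem_of_not_mem hy h0)).const_add c).hasDerivWithinAt)
    ((add_right_injective c).comp inv_injective).injOn]
  simp only [abs_neg, abs_inv, abs_pow, sq_abs]

theorem lintegral_image_const_sub_inv {s : Set ℝ} (hs : MeasurableSet s) (h0 : (0 : ℝ) ∉ s)
    (c : ℝ) (f : ℝ → ENNReal) :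
    ∫⁻ x in (fun y => c - y⁻¹) '' s, f x =
      ∫⁻ y in s, ENNReal.ofReal (y ^ 2)⁻¹ * f (c - y⁻¹) := by
  rw [lintegral_image_eq_lintegral_abs_deriv_mul hs
    (fun y hy => ((hasDerivAt_inv (ne_of_mem_of_not_mem hy h0)).const_sub c).hasDerivWithinAt)
    ((sub_right_injective (b := c)).comp inv_injective).injOn]
  simp only [neg_neg, abs_inv, abs_pow, sq_abs]

theorem lehnerMap_of_lt {x : ℝ} (hx : x < 3 / 2) : lehnerMap x = (2 - x)⁻¹ := by
  simp [lehnerMap, hx]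

theorem lehnerMap_of_le {x : ℝ} (hx : 3 / 2 ≤ x) : lehnerMap x = (x - 1)⁻¹ := by
  simp [lehnerMap, hx.not_gt]

theorem measurable_lehnerMap : Measurable lehnerMap :=
  Measurable.ite measurableSet_Iio (by fun_prop) (by fun_prop)

theorem preimage_lehnerMap_inter_Ico_one {A : Set ℝ} (hA : A ⊆ Ico 1 2) :
    lehnerMap ⁻¹' A ∩ Ico 1 (3 / 2) = (fun y => 2 - y⁻¹) '' A := by
  ext x
  constructor
  · rintro ⟨hxA, hx1, hx2⟩
    rw [mem_preimage, lehnerMap_of_lt hx2] at hxA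
    exact ⟨_, hxA, by simp⟩
  · rintro ⟨y, hy, rfl⟩
    obtain ⟨hy1, hy2⟩ := hA hy
    have hinv : 2⁻¹ < y⁻¹ ∧ y⁻¹ ≤ 1 :=
      ⟨(inv_lt_inv₀ two_pos (by linarith)).2 hy2, inv_le_one_of_one_le₀ hy1⟩
    have hx : 2 - y⁻¹ < 3 / 2 := by linarith
    refine ⟨?_, by linarith, hx⟩
    rwa [mem_preimage, lehnerMap_of_lt hx, sub_sub_cancel, inv_inv]

theorem preimage_lehnerMap_inter_Ico_three_halves {A : Set ℝ} (hA : A ⊆ Ico 1 2) :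
    lehnerMap ⁻¹' A ∩ Ico (3 / 2) 2 = (fun y => 1 + y⁻¹) '' (A \ {1}) := by
  ext x
  constructor
  · rintro ⟨hxA, hx1, hx2⟩
    rw [mem_preimage, lehnerMap_of_le hx1] at hxA
    have hx : (x - 1)⁻¹ ≠ 1 := by
      rw [Ne, inv_eq_one]; linarith
    exact ⟨_, ⟨hxA, hx⟩, by simp⟩
  · rintro ⟨y, ⟨hy, hy1⟩, rfl⟩
    have hy1 : 1 < y := lt_of_le_of_ne (hA hy).1 (Ne.symm hy1)
    have hy2 := (hA hy).2
    have hinv : 2⁻¹ < y⁻¹ ∧ y⁻¹ < 1 :=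
      ⟨(inv_lt_inv₀ two_pos (by linarith)).2 hy2, inv_lt_one_of_one_lt₀ hy1⟩
    have hx : 3 / 2 ≤ 1 + y⁻¹ := by linarith
    refine ⟨?_, hx, by linarith⟩
    rwa [mem_preimage, lehnerMap_of_le hx, add_sub_cancel_left, inv_inv]

theorem lehnerDensity_transfer {y : ℝ} (hy : 1 < y) :
    ENNReal.ofReal (y ^ 2)⁻¹ * ENNReal.ofReal (1 / (2 - y⁻¹ - 1)) +
      ENNReal.ofReal (y ^ 2)⁻¹ * ENNReal.ofReal (1 / (1 + y⁻¹ - 1)) =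
      ENNReal.ofReal (1 / (y - 1)) := by
  have hy0 : 0 < y := by linarith
  have hy1 : 0 < y - 1 := by linarith
  have hsq : 0 ≤ (y ^ 2)⁻¹ := by positivity
  rw [show 2 - y⁻¹ - 1 = (y - 1) / y by field_simp; ring, add_sub_cancel_left, one_div_div,
    one_div, inv_inv, ← ENNReal.ofReal_mul hsq, ← ENNReal.ofReal_mul hsq,
    ← ENNReal.ofReal_add (by positivity) (by positivity)]
  congr 1
  field_simp [hy1.ne']
  ring

/-- The Lehner Gauss map preserves the measure with density 1/(x-1) on [1,2). -/
theorem lehnerMap_invariant_measure :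
    ∀ A : Set ℝ, MeasurableSet A → A ⊆ Set.Ico (1 : ℝ) 2 →
      ∫⁻ x in lehnerMap ⁻¹' A ∩ Set.Ico (1 : ℝ) 2, ENNReal.ofReal (1 / (x - 1)) =
      ∫⁻ x in A, ENNReal.ofReal (1 / (x - 1)) := by
  intro A hA hAsub
  have h0 : (0 : ℝ) ∉ A := fun h => by linarith [(hAsub h).1]
  have hpre : MeasurableSet (lehnerMap ⁻¹' A) := measurable_lehnerMap hA
  rw [← Ico_union_Ico_eq_Ico (by norm_num : (1 : ℝ) ≤ 3 / 2) (by norm_num),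
    inter_union_distrib_left,
    lintegral_union (hpre.inter measurableSet_Ico)
      (Ico_disjoint_Ico_same.mono inter_subset_right inter_subset_right),
    preimage_lehnerMap_inter_Ico_one hAsub, preimage_lehnerMap_inter_Ico_three_halves hAsub,
    lintegral_image_const_sub_inv hA h0,
    lintegral_image_const_add_inv (hA.diff (measurableSet_singleton 1)) (fun h => h0 h.1),
    setLIntegral_congr (sdiff_null_ae_eq_self (Real.volume_singleton)),
    ← lintegral_add_left (by fun_prop)]
  refine setLIntegral_congr_fun_ae hA ?_
  filter_upwards [volume.ae_ne 1] with y hy1 hy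
  exact lehnerDensity_transfer (lt_of_le_of_ne (hAsub hy).1 (Ne.symm hy1))
end

section
/- If α ∈ (1,2) is a quadratic irrational root of Ax² + Bx + C with A,B,C ∈ ℤ, A ≥ 1, D = B² − 4AC, and its Galois conjugate ᾱ satisfies 0 < ᾱ < 1, then (2A + B)² < D, A + B + C < 0, and A = (D − (2A+B)²)/(−4(A+B+C)) < D; in particular, for fixed discriminant D there are only finitely many such α. -/
/-- If α ∈ (1,2) is a quadratic irrational with Galois conjugate 0 < ᾱ < 1,
then with D = B² - 4AC one has (2A+B)² < D, A + B + C < 0,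
A = (D - (2A+B)²)/(-4(A+B+C)) and A < D. -/
theorem quad_irrational_pos_conjugate_bounds
    (A B C : ℤ) (hA : 1 ≤ A) (α ᾱ : ℝ) (hirr : Irrational α)
    (hroot : (A : ℝ) * α ^ 2 + B * α + C = 0)
    (hroot' : (A : ℝ) * ᾱ ^ 2 + B * ᾱ + C = 0) (hne : ᾱ ≠ α)
    (hα1 : 1 < α) (hα2 : α < 2) (hc0 : 0 < ᾱ) (hc1 : ᾱ < 1) :
    (2 * A + B) ^ 2 < B ^ 2 - 4 * A * C ∧
    A + B + C < 0 ∧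
    (A : ℝ) = ((B ^ 2 - 4 * A * C : ℤ) - (2 * A + B) ^ 2) /
        (-4 * ((A : ℝ) + B + C)) ∧
    A < B ^ 2 - 4 * A * C := by
  have hAR : (0 : ℝ) < A := by exact_mod_cast hA.trans_lt' zero_lt_one
  have hdiff : (α - ᾱ) * ((A : ℝ) * (α + ᾱ) + B) = 0 := by nlinarith [hroot, hroot']
  have hsub : α - ᾱ ≠ 0 := sub_ne_zero.2 (Ne.symm hne)
  have hsum : (A : ℝ) * (α + ᾱ) + B = 0 := by
    rcases mul_eq_zero.1 hdiff with h | h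
    · exact absurd h hsub
    · exact h
  have hprod : (C : ℝ) = A * (α * ᾱ) := by nlinarith [hroot, hsum]
  have hfac : ((A : ℝ) + B + C) = A * (1 - α) * (1 - ᾱ) := by
    have hB : (B : ℝ) = -(A * (α + ᾱ)) := by linarith
    rw [hB, hprod]; ring
  have habcR : ((A : ℝ) + B + C) < 0 := by
    rw [hfac]
    have h1 : (1 : ℝ) - α < 0 := by linarith
    have h2 : (0 : ℝ) < 1 - ᾱ := by linarith
    have := mul_pos (mul_pos hAR (neg_pos.2 h1)) h2; nlinarith [this]
  have habc : A + B + C < 0 := by exact_mod_cast habcR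
  have hkey : (2 * A + B) ^ 2 - (B ^ 2 - 4 * A * C) = 4 * A * (A + B + C) := by ring
  have h1 : (2 * A + B) ^ 2 < B ^ 2 - 4 * A * C := by nlinarith [hkey, habc, hA]
  refine ⟨h1, habc, ?_, ?_⟩
  · have hden : (-4 : ℝ) * ((A : ℝ) + B + C) ≠ 0 := by
      intro h; nlinarith
    rw [eq_div_iff hden]
    push_cast
    ring
  · nlinarith [sq_nonneg (2 * A + B), habc, hA]
end

section
/- Every hyperbolic geodesic in the upper half plane that crosses both the geodesic from 1+i to ∞ (the vertical line Re z = 1 above height 1) and the geodesic arc from 1+i to (3+i√3)/2 (part of the unit circle centered at 1), when represented as a Euclidean semicircle with real endpoints γ₋∞ < γ∞, satisfies γ₋∞ < 0 and 1 < γ∞ < 2. -/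
set_option maxHeartbeats 1000000 in
/-- Any hyperbolic geodesic, realized as a Euclidean semicircle with real
endpoints a < b, that crosses the vertical geodesic from 1+i to ∞ (at a point
(1,y) with y > 1) and meets the geodesic arc from 1+i to (3+i√3)/2 (a point of
the unit circle |z-1| = 1 with real part in [1, 3/2] and positive imaginary
part) has endpoints satisfying a < 0 and 1 < b < 2. -/
theorem geodesic_crossing_endpoints (a b : ℝ) (hab : a < b)
    (hvert : ∃ x y : ℝ, (x - (a + b) / 2) ^ 2 + y ^ 2 = ((b - a) / 2) ^ 2 ∧
      x = 1 ∧ 1 < y)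
    (harc : ∃ x y : ℝ, (x - (a + b) / 2) ^ 2 + y ^ 2 = ((b - a) / 2) ^ 2 ∧
      (x - 1) ^ 2 + y ^ 2 = 1 ∧ 1 ≤ x ∧ x ≤ 3 / 2 ∧ 0 < y) :
    a < 0 ∧ 1 < b ∧ b < 2 := by
  obtain ⟨x1, y1, h1, hx1eq, hy1⟩ := hvert
  subst hx1eq
  obtain ⟨x, y, h2, h3, hxl, hxr, hy⟩ := harc
  -- (1-a)(b-1) = y1^2 > 1
  have key1 : (1 - a) * (b - 1) = y1 ^ 2 := by linear_combination -h1
  have h4 : 1 < (1 - a) * (b - 1) := by nlinarith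
  -- endpoints relation with the arc point
  have hk : a * b = x * (a + b - 2) := by linear_combination h2 - h3
  -- (x-a)(x-b) = -y^2 < 0
  have hprod : (x - a) * (x - b) < 0 := by nlinarith
  have ha1 : a < 1 := by nlinarith
  have hb1 : 1 < b := by nlinarith
  have hax : a < x := by nlinarith
  have hxb : x < b := by nlinarith
  have hs : a + b - 2 < 0 := by
    by_contra h; push_neg at h
    nlinarith [mul_nonneg (sub_nonneg.2 hxl) h]
  have hp : x * (a + b - 2) < 0 := mul_neg_of_pos_of_neg (by linarith) hs
  have ha0 : a < 0 := by nlinarith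
  have h5 : (b - 2) * (a - x) = a * (x - 2) := by linear_combination hk
  have h6 : 0 < a * (x - 2) := mul_pos_of_neg_of_neg ha0 (by linarith)
  exact ⟨ha0, hb1, by nlinarith⟩
end
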